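/- arXiv:cs/0412046 — 10 statements merged into one kernel-verified Lean document; each statement's English description precedes it below -/
import Mathlib

section
/- Let κ : ℝ → Set(ℝ^d) be a nested convex family (each κ(λ) compact and convex, κ monotone, and κ(λ) = ⋂_{λ'>λ} κ(λ') for every λ), such that for every x ∈ ℝ^d the set {λ ∈ ℝ | x ∈ κ(λ)} is nonempty and bounded below, and let q_κ(x) = inf{λ ∈ ℝ | x ∈ κ(λ)}. Then the nested convex family reconstructed from q_κ equals κ: for every λ ∈ ℝ, ⋂_{λ'>λ} closure({x ∈ ℝ^d | q_κ(x) ≤ λ'}) = κ(λ). -/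
/-- Reconstructing a nested convex family from its associated quasiconvex function `q_κ`
recovers the family: `⋂_{λ'>λ} closure {x | q_κ x ≤ λ'} = κ λ`. -/
theorem nested_convex_family_reconstruction (d : ℕ)
    (κ : ℝ → Set (EuclideanSpace ℝ (Fin d)))
    (hcompact : ∀ l : ℝ, IsCompact (κ l))
    (hconvex : ∀ l : ℝ, Convex ℝ (κ l))
    (hmono : Monotone κ)
    (hrc : ∀ l : ℝ, κ l = ⋂ l' ∈ Set.Ioi l, κ l')
    (hne : ∀ x : EuclideanSpace ℝ (Fin d), {l : ℝ | x ∈ κ l}.Nonempty)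
    (hbdd : ∀ x : EuclideanSpace ℝ (Fin d), BddBelow {l : ℝ | x ∈ κ l})
    (q : EuclideanSpace ℝ (Fin d) → ℝ)
    (hq : ∀ x, q x = sInf {l : ℝ | x ∈ κ l}) :
    ∀ l : ℝ, (⋂ l' ∈ Set.Ioi l, closure {x | q x ≤ l'}) = κ l := by
  have key : ∀ l : ℝ, {x | q x ≤ l} = κ l := by
    intro l
    ext x
    simp only [Set.mem_setOf_eq, hq]
    constructor
    · intro h
      rw [hrc l]
      simp only [Set.mem_iInter, Set.mem_Ioi]
      intro l' hl'
      obtain ⟨μ, hμ, hμlt⟩ := exists_lt_of_csInf_lt (hne x) (lt_of_le_of_lt h hl')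
      exact hmono hμlt.le hμ
    · intro h
      exact csInf_le (hbdd x) h
  intro l
  have : (⋂ l' ∈ Set.Ioi l, closure {x | q x ≤ l'}) = ⋂ l' ∈ Set.Ioi l, κ l' := by
    refine Set.iInter₂_congr fun l' _ => ?_
    rw [key l', IsClosed.closure_eq (hcompact l').isClosed]
  rw [this, ← hrc l]
end

section
/- Let q : ℝ^d → ℝ be a continuous quasiconvex function all of whose lower level sets {x | q(x) ≤ λ} are bounded. Define κ_q(λ) = ⋂_{λ'>λ} closure({x | q(x) ≤ λ'}). Then the function associated to κ_q recovers q: for every x ∈ ℝ^d, inf{λ ∈ ℝ | x ∈ κ_q(λ)} = q(x). -/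
/-- For a continuous quasiconvex function `q` with bounded lower level sets, the function
associated to the nested convex family `κ_q` recovers `q`. -/
theorem function_of_nested_convex_family_of_quasiconvex (d : ℕ)
    (q : EuclideanSpace ℝ (Fin d) → ℝ)
    (hcont : Continuous q)
    (hqc : QuasiconvexOn ℝ Set.univ q)
    (hbdd : ∀ l : ℝ, Bornology.IsBounded {x | q x ≤ l})
    (κ : ℝ → Set (EuclideanSpace ℝ (Fin d)))
    (hκ : ∀ l : ℝ, κ l = ⋂ l' ∈ Set.Ioi l, closure {x | q x ≤ l'}) :
    ∀ x, sInf {l : ℝ | x ∈ κ l} = q x := by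
  intro x
  have hclosed : ∀ l' : ℝ, closure {x | q x ≤ l'} = {x | q x ≤ l'} := fun l' =>
    (isClosed_le hcont continuous_const).closure_eq
  have hmem : ∀ l : ℝ, x ∈ κ l ↔ q x ≤ l := by
    intro l
    rw [hκ l]
    simp only [Set.mem_iInter, hclosed, Set.mem_setOf_eq, Set.mem_Ioi]
    constructor
    · intro h
      exact le_of_forall_gt_imp_ge_of_dense fun l' hl' => h l' hl'
    · intro h l' hl'
      exact h.trans hl'.le
  have : {l : ℝ | x ∈ κ l} = Set.Ici (q x) := by
    ext l; simp [hmem l, Set.mem_Ici]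
  rw [this, csInf_Ici]
end

section
/- Let u = (-1, 0) and w = (1, 0) in the Euclidean plane ℝ², and let H = {(x, y) ∈ ℝ² | y > 0} be the open upper halfplane. Then the function q(v) = π − ∠uvw, where ∠uvw denotes the Euclidean angle at v between the rays from v to u and from v to w, is quasiconvex on H: each lower level set q^{≤λ} is the intersection with H of a closed disk whose boundary circle passes through u and w. -/
/-! Write `θ = ∠ u v w` and `P = dist u v * dist w v` for `v = (x, y)`. In coordinates
`P cos θ = x² + y² - 1` and `P sin θ = 2|y|`. For `0 < λ < π` and `y > 0`, the condition
`θ ≥ π - λ` is `sin (θ + λ) ≤ 0`, i.e. `(x² + y² - 1) sin λ + 2 y cos λ ≤ 0`, which is the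
closed disk with center `(0, -cot λ)` and radius `1 / sin λ`; its boundary circle passes
through `(±1, 0)`. Levels `λ ≤ 0` give the empty set (as `θ < π` off the line `uw`) and
levels `λ ≥ π` the whole halfplane, all convex. -/

open Real EuclideanGeometry InnerProductGeometry

theorem mul_nonpos_iff_of_pos_right {R : Type*} [MulZeroClass R] [Preorder R] [MulPosMono R]
    [MulPosReflectLE R] {a c : R} (hc : 0 < c) : a * c ≤ 0 ↔ a ≤ 0 := by
  simpa using mul_le_mul_iff_of_pos_right (b := a) (c := 0) hc

namespace EuclideanSpace

lemma real_inner_fin_two (a b : EuclideanSpace ℝ (Fin 2)) :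
    inner ℝ a b = a 0 * b 0 + a 1 * b 1 := by
  simp [PiLp.inner_apply, Fin.sum_univ_two, mul_comm]

lemma real_norm_sq_fin_two (a : EuclideanSpace ℝ (Fin 2)) : ‖a‖ ^ 2 = a 0 ^ 2 + a 1 ^ 2 := by
  simp [EuclideanSpace.real_norm_sq_eq, Fin.sum_univ_two]

lemma dist_sq_fin_two (a b : EuclideanSpace ℝ (Fin 2)) :
    dist a b ^ 2 = (a 0 - b 0) ^ 2 + (a 1 - b 1) ^ 2 := by
  rw [dist_eq_norm, real_norm_sq_fin_two]; rfl

lemma sin_angle_mul_norm_mul_norm_fin_two (a b : EuclideanSpace ℝ (Fin 2)) :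
    sin (angle a b) * (‖a‖ * ‖b‖) = |a 0 * b 1 - a 1 * b 0| := by
  rw [sin_angle_mul_norm_mul_norm, real_inner_self_eq_norm_sq, real_inner_self_eq_norm_sq,
    real_norm_sq_fin_two, real_norm_sq_fin_two, real_inner_fin_two, ← sqrt_sq_eq_abs]
  congr 1
  ring

end EuclideanSpace

open EuclideanSpace

lemma pi_le_add_iff_sin_add_nonpos {θ l : ℝ} (hθ₀ : 0 ≤ θ) (hθπ : θ ≤ π) (hl₀ : 0 < l)
    (hlπ : l < π) : π ≤ θ + l ↔ sin (θ + l) ≤ 0 := by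
  constructor
  · intro h
    rw [← sub_add_cancel (θ + l) π, sin_add_pi, neg_nonpos]
    exact sin_nonneg_of_nonneg_of_le_pi (by linarith) (by linarith)
  · intro h
    by_contra! h'
    exact (sin_pos_of_pos_of_lt_pi (by linarith) h').not_ge h

section

variable {u w : EuclideanSpace ℝ (Fin 2)}

lemma cos_angle_mul_dist_mul_dist (hu0 : u 0 = -1) (hu1 : u 1 = 0) (hw0 : w 0 = 1)
    (hw1 : w 1 = 0) (v : EuclideanSpace ℝ (Fin 2)) :
    cos (∠ u v w) * (dist u v * dist w v) = v 0 ^ 2 + v 1 ^ 2 - 1 := by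
  rw [EuclideanGeometry.angle, dist_eq_norm_vsub, dist_eq_norm_vsub, cos_angle_mul_norm_mul_norm,
    real_inner_fin_two]
  simp only [vsub_eq_sub, PiLp.sub_apply, hu0, hu1, hw0, hw1]
  ring

lemma sin_angle_mul_dist_mul_dist (hu0 : u 0 = -1) (hu1 : u 1 = 0) (hw0 : w 0 = 1)
    (hw1 : w 1 = 0) (v : EuclideanSpace ℝ (Fin 2)) :
    sin (∠ u v w) * (dist u v * dist w v) = 2 * |v 1| := by
  rw [EuclideanGeometry.angle, dist_eq_norm_vsub, dist_eq_norm_vsub,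
    sin_angle_mul_norm_mul_norm_fin_two]
  simp only [vsub_eq_sub, PiLp.sub_apply, hu0, hu1, hw0, hw1]
  rw [← abs_two, ← abs_mul]
  congr 1
  ring

lemma angle_lt_pi_of_pos (hu0 : u 0 = -1) (hu1 : u 1 = 0) (hw0 : w 0 = 1) (hw1 : w 1 = 0)
    {v : EuclideanSpace ℝ (Fin 2)} (hv : 0 < v 1) : ∠ u v w < π := by
  refine (angle_le_pi u v w).lt_of_ne fun h => ?_
  have := sin_angle_mul_dist_mul_dist hu0 hu1 hw0 hw1 v
  rw [h, sin_pi, zero_mul, abs_of_pos hv] at this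
  linarith

lemma pi_sub_angle_le_iff (hu0 : u 0 = -1) (hu1 : u 1 = 0) (hw0 : w 0 = 1) (hw1 : w 1 = 0)
    {v : EuclideanSpace ℝ (Fin 2)} (hv : 0 < v 1) {l : ℝ} (hl₀ : 0 < l) (hlπ : l < π) :
    π - ∠ u v w ≤ l ↔ (v 0 ^ 2 + v 1 ^ 2 - 1) * sin l + 2 * v 1 * cos l ≤ 0 := by
  have hdist : 0 < dist u v * dist w v := by
    refine mul_pos (dist_pos.2 fun h => ?_) (dist_pos.2 fun h => ?_) <;>
      simp_all only [lt_self_iff_false]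
  have hsin : sin (∠ u v w + l) * (dist u v * dist w v) =
      (v 0 ^ 2 + v 1 ^ 2 - 1) * sin l + 2 * v 1 * cos l := by
    rw [sin_add, add_mul, mul_right_comm, mul_right_comm (cos _),
      sin_angle_mul_dist_mul_dist hu0 hu1 hw0 hw1, cos_angle_mul_dist_mul_dist hu0 hu1 hw0 hw1,
      abs_of_pos hv]
    ring
  rw [sub_le_iff_le_add', pi_le_add_iff_sin_add_nonpos (angle_nonneg u v w)
    (angle_le_pi u v w) hl₀ hlπ, ← hsin, mul_nonpos_iff_of_pos_right hdist]

end

lemma dist_sq_mul_sin_sq_sub_one (v : EuclideanSpace ℝ (Fin 2)) {l : ℝ} (hl : sin l ≠ 0) :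
    dist v !₂[0, -cot l] ^ 2 * sin l ^ 2 - 1 =
      ((v 0 ^ 2 + v 1 ^ 2 - 1) * sin l + 2 * v 1 * cos l) * sin l := by
  rw [dist_sq_fin_two, cot_eq_cos_div_sin]
  simp only [Matrix.cons_val_zero, Matrix.cons_val_one]
  field_simp
  linear_combination sin_sq_add_cos_sq l

lemma dist_le_inv_sin_iff (v : EuclideanSpace ℝ (Fin 2)) {l : ℝ} (hl : 0 < sin l) :
    dist v !₂[0, -cot l] ≤ (sin l)⁻¹ ↔ (v 0 ^ 2 + v 1 ^ 2 - 1) * sin l + 2 * v 1 * cos l ≤ 0 := by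
  have := dist_sq_mul_sin_sq_sub_one v hl.ne'
  rw [← one_div, le_div_iff₀ hl, ← pow_le_one_iff_of_nonneg (by positivity) two_ne_zero, mul_pow,
    ← sub_nonpos, this, mul_nonpos_iff_of_pos_right hl]

lemma dist_eq_inv_sin {v : EuclideanSpace ℝ (Fin 2)} (hv0 : v 0 ^ 2 = 1) (hv1 : v 1 = 0)
    {l : ℝ} (hl : 0 < sin l) : dist v !₂[0, -cot l] = (sin l)⁻¹ := by
  have h := dist_sq_mul_sin_sq_sub_one v hl.ne'
  rw [hv0, hv1] at h
  have hsq : (dist v !₂[0, -cot l] * sin l) ^ 2 = 1 := by linear_combination h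
  exact eq_inv_of_mul_eq_one_left ((pow_eq_one_iff_of_nonneg (by positivity) two_ne_zero).1 hsq)

lemma setOf_pi_sub_angle_le_eq {u w : EuclideanSpace ℝ (Fin 2)} (hu0 : u 0 = -1) (hu1 : u 1 = 0)
    (hw0 : w 0 = 1) (hw1 : w 1 = 0) {l : ℝ} (hl₀ : 0 < l) (hlπ : l < π) :
    {v : EuclideanSpace ℝ (Fin 2) | 0 < v 1 ∧ π - ∠ u v w ≤ l} =
      {v : EuclideanSpace ℝ (Fin 2) | 0 < v 1} ∩ Metric.closedBall !₂[0, -cot l] (sin l)⁻¹ := by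
  ext v
  exact and_congr_right fun hv => (pi_sub_angle_le_iff hu0 hu1 hw0 hw1 hv hl₀ hlπ).trans
    (dist_le_inv_sin_iff v (sin_pos_of_pos_of_lt_pi hl₀ hlπ)).symm

open Real EuclideanGeometry in
/-- The complementary angle function `q(v) = π − ∠ u v w`, for `u = (-1,0)` and `w = (1,0)`,
is quasiconvex on the open upper halfplane: each lower level set `q ≤ λ` (for `0 < λ < π`)
is the intersection with the halfplane of a closed disk whose boundary circle passes
through `u` and `w`. -/
theorem quasiconvexOn_complementary_angle
    (u w : EuclideanSpace ℝ (Fin 2))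
    (hu0 : u 0 = -1) (hu1 : u 1 = 0) (hw0 : w 0 = 1) (hw1 : w 1 = 0)
    (H : Set (EuclideanSpace ℝ (Fin 2))) (hH : H = {v | 0 < v 1})
    (q : EuclideanSpace ℝ (Fin 2) → ℝ)
    (hq : ∀ v, q v = π - ∠ u v w) :
    QuasiconvexOn ℝ H q ∧
      ∀ l ∈ Set.Ioo 0 π, ∃ c : EuclideanSpace ℝ (Fin 2), ∃ r : ℝ,
        dist u c = r ∧ dist w c = r ∧
        {v ∈ H | q v ≤ l} = H ∩ Metric.closedBall c r := by
  subst hH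
  obtain rfl : q = fun v => π - ∠ u v w := funext hq
  have hconvex : Convex ℝ {v : EuclideanSpace ℝ (Fin 2) | 0 < v 1} :=
    convex_halfSpace_gt ⟨fun _ _ => rfl, fun _ _ => rfl⟩ 0
  refine ⟨fun l => ?_, fun l ⟨hl₀, hlπ⟩ => ?_⟩
  · rcases le_or_gt l 0 with hl₀ | hl₀
    · convert convex_empty
      refine Set.eq_empty_of_forall_notMem fun v ⟨hv, hle⟩ => ?_
      linarith [angle_lt_pi_of_pos hu0 hu1 hw0 hw1 hv]
    rcases lt_or_ge l π with hlπ | hlπ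
    · exact setOf_pi_sub_angle_le_eq hu0 hu1 hw0 hw1 hl₀ hlπ ▸
        hconvex.inter (convex_closedBall _ _)
    · convert hconvex using 1
      exact Set.sep_eq_self_iff_mem_true.2 fun v _ => by linarith [angle_nonneg u v w]
  · have hsin := sin_pos_of_pos_of_lt_pi hl₀ hlπ
    exact ⟨_, _, dist_eq_inv_sin (by simp [hu0]) hu1 hsin,
      dist_eq_inv_sin (by simp [hw0]) hw1 hsin, setOf_pi_sub_angle_le_eq hu0 hu1 hw0 hw1 hl₀ hlπ⟩
end

section
/- Let I be a finite nonempty index set and for each i ∈ I let κ_i : ℝ → Set(ℝ^d) be a nested convex family (each κ_i(λ) compact and convex, κ_i monotone, and κ_i(λ) = ⋂_{λ'>λ} κ_i(λ') for every λ). Suppose the set L = {λ ∈ ℝ | ⋂_{i∈I} κ_i(λ) ≠ ∅} is nonempty and bounded below, and let λ* = inf L. Then the infimum is attained: ⋂_{i∈I} κ_i(λ*) ≠ ∅. -/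
/-!
Compact sets are closed, so the common part `K λ = ⋂ i, κ i λ` is again a monotone,
right-continuous family of compact sets. Every level above `λ* = inf L` lies above a point of `L`, so `K λ` is nonempty for
all `λ > λ*`; these sets form a nested family of nonempty compacta, whose intersection `K λ*` is
therefore nonempty.
-/

open Set

theorem Monotone.nonempty_of_forall_gt_nonempty {α X : Type*} [LinearOrder α] [NoMaxOrder α]
    [TopologicalSpace X] [T2Space X] {K : α → Set X} (hK : ∀ l, IsCompact (K l))
    (hmono : Monotone K) {m : α} (hrc : K m = ⋂ l ∈ Ioi m, K l)
    (hgt : ∀ l, m < l → (K l).Nonempty) : (K m).Nonempty := by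
  have : Nonempty (Ioi m) := nonempty_Ioi_subtype
  rw [hrc, biInter_eq_iInter]
  exact IsCompact.nonempty_iInter_of_directed_nonempty_isCompact_isClosed _
    (hmono.comp (Subtype.mono_coe _)).directed_ge (fun l => hgt l l.2) (fun l => hK l)
    (fun l => (hK l).isClosed)

theorem isCompact_iInter {ι X : Type*} [Nonempty ι] [TopologicalSpace X] [T2Space X]
    {s : ι → Set X} (hs : ∀ i, IsCompact (s i)) : IsCompact (⋂ i, s i) :=
  (hs (Classical.arbitrary ι)).of_isClosed_subset (isClosed_iInter fun i => (hs i).isClosed)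
    (iInter_subset _ _)

theorem iInter_eq_biInter_Ioi_iInter {ι α X : Type*} [Preorder α] {κ : ι → α → Set X}
    (hrc : ∀ i l, κ i l = ⋂ l' ∈ Ioi l, κ i l') (m : α) :
    ⋂ i, κ i m = ⋂ l ∈ Ioi m, ⋂ i, κ i l := by
  simp_rw [hrc _ m, iInter_comm (ι := ι)]

theorem quasiconvex_program_infimum_attained_general (d : ℕ) {ι : Type*} [Nonempty ι]
    (κ : ι → ℝ → Set (EuclideanSpace ℝ (Fin d)))
    (hcompact : ∀ i l, IsCompact (κ i l))
    (hmono : ∀ i, Monotone (κ i))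
    (hrc : ∀ i l, κ i l = ⋂ l' ∈ Set.Ioi l, κ i l')
    (L : Set ℝ) (hL : L = {l | (⋂ i, κ i l).Nonempty})
    (hne : L.Nonempty) :
    (⋂ i, κ i (sInf L)).Nonempty := by
  have hmono_iInter : Monotone fun l => ⋂ i, κ i l := fun _ _ h => iInter_mono fun i => hmono i h
  refine hmono_iInter.nonempty_of_forall_gt_nonempty
    (fun l => isCompact_iInter fun i => hcompact i l) (iInter_eq_biInter_Ioi_iInter hrc _)
    fun l hl => ?_
  obtain ⟨l₀, hl₀, hlt⟩ := exists_lt_of_csInf_lt hne hl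
  rw [hL] at hl₀
  exact hl₀.mono (hmono_iInter hlt.le)

/-- The value of a quasiconvex program is attained: if the set of levels `λ` at which the
nested convex families `κ i` have a common point is nonempty and bounded below, then the
families have a common point at the infimum level. -/
theorem quasiconvex_program_infimum_attained (d : ℕ) {ι : Type*} [Fintype ι] [Nonempty ι]
    (κ : ι → ℝ → Set (EuclideanSpace ℝ (Fin d)))
    (hcompact : ∀ i l, IsCompact (κ i l))
    (hconvex : ∀ i l, Convex ℝ (κ i l))
    (hmono : ∀ i, Monotone (κ i))
    (hrc : ∀ i l, κ i l = ⋂ l' ∈ Set.Ioi l, κ i l')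
    (L : Set ℝ) (hL : L = {l | (⋂ i, κ i l).Nonempty})
    (hne : L.Nonempty) (hbdd : BddBelow L) :
    (⋂ i, κ i (sInf L)).Nonempty :=
  quasiconvex_program_infimum_attained_general d κ hcompact hmono hrc L hL hne
end

section
/- Let S be a finite index set and for each i ∈ S let κ_i : ℝ → Set(ℝ^d) be a map such that every κ_i(μ) is convex and κ_i is monotone (μ₁ ≤ μ₂ implies κ_i(μ₁) ⊆ κ_i(μ₂)). Fix λ ∈ ℝ and suppose that for every μ < λ the full intersection ⋂_{i∈S} κ_i(μ) is empty. Then there exists a subset B ⊆ S with |B| ≤ d + 1 such that for every μ < λ, ⋂_{i∈B} κ_i(μ) is empty. -/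
/-- Helly-style lemma: if the full intersection of monotone convex families is empty for every
level below `λ`, then some subfamily of at most `d + 1` of them already has empty intersection
for every level below `λ`. -/
theorem exists_small_subfamily_empty_intersection (d : ℕ) {ι : Type*} [Fintype ι]
    (κ : ι → ℝ → Set (EuclideanSpace ℝ (Fin d)))
    (hconvex : ∀ i m, Convex ℝ (κ i m))
    (hmono : ∀ i, Monotone (κ i))
    (l : ℝ) (h : ∀ m < l, (⋂ i, κ i m) = ∅) :
    ∃ B : Finset ι, B.card ≤ d + 1 ∧ ∀ m < l, (⋂ i ∈ B, κ i m) = ∅ := by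
  classical
  have hrank : Module.finrank ℝ (EuclideanSpace ℝ (Fin d)) = d := by
    simp [finrank_euclideanSpace]
  have key : ∀ m < l, ∃ B : Finset ι, B.card ≤ d + 1 ∧ (⋂ i ∈ B, κ i m) = ∅ := by
    intro m hm
    by_contra hc
    push_neg at hc
    have hne : (⋂ i ∈ (Finset.univ : Finset ι), κ i m).Nonempty := by
      apply Convex.helly_theorem' (fun i _ => hconvex i m)
      intro I _ hI
      rw [hrank] at hI
      exact hc I hI
    rw [show (⋂ i ∈ (Finset.univ : Finset ι), κ i m) = ⋂ i, κ i m by simp, h m hm] at hne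
    exact hne.ne_empty rfl
  -- choose a subfamily for each level `l - 1/(n+1)`
  have hlt : ∀ n : ℕ, l - 1 / (n + 1 : ℝ) < l := by
    intro n
    have : (0:ℝ) < 1 / (n + 1 : ℝ) := by positivity
    linarith
  choose f hf1 hf2 using fun n : ℕ => key (l - 1 / (n + 1 : ℝ)) (hlt n)
  obtain ⟨B, hB⟩ := Finite.exists_infinite_fiber f
  rw [Set.infinite_coe_iff] at hB
  refine ⟨B, ?_, ?_⟩
  · obtain ⟨n, hn⟩ := hB.nonempty
    exact hn ▸ hf1 n
  · intro m hm
    obtain ⟨N, hN⟩ := exists_nat_one_div_lt (sub_pos.2 hm)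
    obtain ⟨n, hn, hnN⟩ := hB.exists_gt N
    have h1 : (1:ℝ) / (n + 1) ≤ 1 / (N + 1) := by
      apply one_div_le_one_div_of_le (by positivity)
      have : (N:ℝ) ≤ n := by exact_mod_cast hnN.le
      linarith
    have hmn : m ≤ l - 1 / (n + 1 : ℝ) := by linarith
    rw [← Set.subset_empty_iff, ← hf2 n]
    have : B = f n := hn.symm
    rw [this]
    exact Set.iInter₂_mono fun i _ => hmono i hmn
end

section
/- Let S be a finite index set and for each i ∈ S let κ_i : ℝ → Set(ℝ^d) be a nested convex family (each κ_i(λ) compact and convex, κ_i monotone, and κ_i(λ) = ⋂_{λ'>λ} κ_i(λ') for every λ). For T ⊆ S let λ(T) = inf{λ ∈ ℝ | ⋂_{i∈T} κ_i(λ) ≠ ∅}. Suppose {λ | ⋂_{i∈S} κ_i(λ) ≠ ∅} is nonempty and bounded below. Then there exists a subset B ⊆ S with |B| ≤ d + 1 such that {λ | ⋂_{i∈B} κ_i(λ) ≠ ∅} is bounded below and λ(B) = λ(S). -/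
/-!
Let `λ*` be the value of the whole family. The feasible levels of a monotone family form an
up-set, and there are only finitely many subfamilies of at most `d + 1` members. If each of them
were feasible at some level `< λ*`, all of them would be feasible at the largest of these levels,
and Helly's theorem would make the whole family feasible below `λ*`. So some such subfamily `B` is
infeasible at every level `< λ*`; as `B` is feasible wherever the whole family is, its value is
`λ*`.
-/

open Set

section LevelSets

variable {ι α E : Type*} [LinearOrder α] {κ : ι → α → Set E}

theorem nonempty_biInter_of_le (hmono : ∀ i, Monotone (κ i)) {B : Set ι} {l l' : α}
    (hl : (⋂ i ∈ B, κ i l).Nonempty) (hll' : l ≤ l') : (⋂ i ∈ B, κ i l').Nonempty :=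
  hl.mono <| iInter₂_mono fun i _ => hmono i hll'

theorem exists_card_le_forall_nonempty_biInter_imp_le [Finite ι] (k : ℕ)
    (hmono : ∀ i, Monotone (κ i))
    (hhelly : ∀ l, (∀ B : Finset ι, B.card ≤ k → (⋂ i ∈ B, κ i l).Nonempty) →
      (⋂ i, κ i l).Nonempty)
    {c : α} (hc : ∀ l, (⋂ i, κ i l).Nonempty → c ≤ l) :
    ∃ B : Finset ι, B.card ≤ k ∧ ∀ l, (⋂ i ∈ B, κ i l).Nonempty → c ≤ l := by
  by_contra! hsmall
  choose lev hlev hlev_lt using fun B : {B : Finset ι // B.card ≤ k} => hsmall B B.2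
  have : Nonempty {B : Finset ι // B.card ≤ k} := ⟨⟨∅, by simp⟩⟩
  obtain ⟨B₀, hB₀⟩ := Finite.exists_max lev
  have hfeasible : (⋂ i, κ i (lev B₀)).Nonempty :=
    hhelly _ fun B hB => nonempty_biInter_of_le hmono (hlev ⟨B, hB⟩) (hB₀ ⟨B, hB⟩)
  exact (hlev_lt B₀).not_ge (hc _ hfeasible)

end LevelSets

theorem exists_small_subfamily_same_value_general (d : ℕ) {ι : Type*} [Fintype ι]
    (κ : ι → ℝ → Set (EuclideanSpace ℝ (Fin d)))
    (hcompact : ∀ i l, IsCompact (κ i l))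
    (hconvex : ∀ i l, Convex ℝ (κ i l))
    (hmono : ∀ i, Monotone (κ i))
    (hne : {l : ℝ | (⋂ i, κ i l).Nonempty}.Nonempty)
    (hbdd : BddBelow {l : ℝ | (⋂ i, κ i l).Nonempty}) :
    ∃ B : Finset ι, B.card ≤ d + 1 ∧
      BddBelow {l : ℝ | (⋂ i ∈ B, κ i l).Nonempty} ∧
      sInf {l : ℝ | (⋂ i ∈ B, κ i l).Nonempty} = sInf {l : ℝ | (⋂ i, κ i l).Nonempty} := by
  have hhelly : ∀ l, (∀ B : Finset ι, B.card ≤ d + 1 → (⋂ i ∈ B, κ i l).Nonempty) →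
      (⋂ i, κ i l).Nonempty := fun l h =>
    Convex.helly_theorem_compact' (fun i => hconvex i l) (fun i => hcompact i l)
      (by rwa [finrank_euclideanSpace_fin])
  obtain ⟨B, hcard, hB⟩ := exists_card_le_forall_nonempty_biInter_imp_le (d + 1) hmono hhelly
    fun l hl => csInf_le hbdd hl
  have hsub : {l : ℝ | (⋂ i, κ i l).Nonempty} ⊆ {l : ℝ | (⋂ i ∈ B, κ i l).Nonempty} :=
    fun l hl => hl.mono <| iInter_subset_iInter₂ ..
  exact ⟨B, hcard, ⟨_, hB⟩,
    le_antisymm (csInf_le_csInf ⟨_, hB⟩ hne hsub) (le_csInf (hne.mono hsub) hB)⟩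

/-- The value of a quasiconvex program is determined by a subfamily of at most `d + 1` of the
nested convex families. -/
theorem exists_small_subfamily_same_value (d : ℕ) {ι : Type*} [Fintype ι]
    (κ : ι → ℝ → Set (EuclideanSpace ℝ (Fin d)))
    (hcompact : ∀ i l, IsCompact (κ i l))
    (hconvex : ∀ i l, Convex ℝ (κ i l))
    (hmono : ∀ i, Monotone (κ i))
    (hrc : ∀ i l, κ i l = ⋂ l' ∈ Set.Ioi l, κ i l')
    (hne : {l : ℝ | (⋂ i, κ i l).Nonempty}.Nonempty)
    (hbdd : BddBelow {l : ℝ | (⋂ i, κ i l).Nonempty}) :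
    ∃ B : Finset ι, B.card ≤ d + 1 ∧
      BddBelow {l : ℝ | (⋂ i ∈ B, κ i l).Nonempty} ∧
      sInf {l : ℝ | (⋂ i ∈ B, κ i l).Nonempty} = sInf {l : ℝ | (⋂ i, κ i l).Nonempty} :=
  exists_small_subfamily_same_value_general d κ hcompact hconvex hmono hne hbdd
end

section
/- Let S be a finite nonempty index set and for each i ∈ S let κ_i : ℝ → Set(ℝ^d) be a nested convex family (each κ_i(λ) compact and convex, κ_i monotone, and κ_i(λ) = ⋂_{λ'>λ} κ_i(λ') for every λ). For nonempty T ⊆ S let λ(T) = inf{λ ∈ ℝ | ⋂_{i∈T} κ_i(λ) ≠ ∅} (assumed finite, i.e., this set is nonempty and bounded below for T = S) and let x(T) be the lexicographically least point of ⋂_{i∈T} κ_i(λ(T)). Then there exists a nonempty subset B ⊆ S with |B| ≤ 2d + 1 such that λ(B) = λ(S) and x(B) = x(S). In other words, every quasiconvex program in ℝ^d has a basis of at most 2d + 1 constraints determining its value. -/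
/-!
Below the optimal level `λ(S)` the sets `κ_i(λ)` have empty intersection, and by Helly's theorem
already `d + 1` of them do; since the sets are monotone in `λ`, a single choice of `d + 1` indices works
for every level below `λ(S)`, because finitely many witnessing levels have a maximum. At the level
`λ(S)` itself, the sets `κ_i(λ(S))` are disjoint from the convex cone of points lexicographically
below `x(S)`; Helly applied to the cone together with these sets gives `d + 1` sets with empty
intersection, one of which must be the cone since `x(S)` lies in all the others. The union of the two
index sets has at most `2d + 1` elements and determines both `λ(S)` and `x(S)`.
-/

open Module Finset

instance Pi.Lex.posSMulStrictMono {ι α : Type*} {β : ι → Type*} [LinearOrder ι] [Zero α]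
    [Preorder α] [∀ i, SMul α (β i)] [∀ i, PartialOrder (β i)] [∀ i, PosSMulStrictMono α (β i)] :
    PosSMulStrictMono α (Lex (∀ i, β i)) where
  smul_lt_smul_of_pos_left a ha _ _ := fun ⟨i, hlt, hi⟩ =>
    ⟨i, fun j hj => congrArg (a • ·) (hlt j hj), smul_lt_smul_of_pos_left hi ha⟩

theorem convex_setOf_toLex_lt {ι 𝕜 : Type*} [LinearOrder ι] [Semiring 𝕜] [PartialOrder 𝕜]
    [IsStrictOrderedRing 𝕜] (x : ι → 𝕜) : Convex 𝕜 {y | toLex y < toLex x} :=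
  (convex_Iio (toLex x)).linear_preimage (toLexLinearEquiv 𝕜 (ι → 𝕜)).toLinearMap

section Helly

variable {𝕜 E ι : Type*} [Field 𝕜] [LinearOrder 𝕜] [IsStrictOrderedRing 𝕜] [AddCommGroup E]
  [Module 𝕜 E] [FiniteDimensional 𝕜 E]

theorem Convex.exists_card_le_biInter_eq_empty {F : ι → Set E} {s : Finset ι}
    (h_convex : ∀ i ∈ s, Convex 𝕜 (F i)) (h_empty : ⋂ i ∈ s, F i = ∅) :
    ∃ I ⊆ s, #I ≤ finrank 𝕜 E + 1 ∧ ⋂ i ∈ I, F i = ∅ := by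
  by_contra! h_inter
  exact (Convex.helly_theorem' h_convex h_inter).ne_empty h_empty

theorem Convex.exists_card_le_forall_lt_biInter_eq_empty [Fintype ι] {α : Type*} [LinearOrder α]
    {F : ι → α → Set E} (h_convex : ∀ i l, Convex 𝕜 (F i l)) (h_mono : ∀ i, Monotone (F i))
    {l₀ : α} (h_empty : ∀ l < l₀, ⋂ i, F i l = ∅) :
    ∃ T : Finset ι, #T ≤ finrank 𝕜 E + 1 ∧ ∀ l < l₀, ⋂ i ∈ T, F i l = ∅ := by
  by_contra! h_small
  have : Nonempty α := ⟨l₀⟩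
  choose! level h_lt h_ne using h_small
  set small := (univ : Finset (Finset ι)).filter (#· ≤ finrank 𝕜 E + 1)
  have h_small_ne : small.Nonempty := ⟨∅, by simp [small]⟩
  set m := small.sup' h_small_ne level
  have hm : m < l₀ := (sup'_lt_iff h_small_ne).2 fun T hT => h_lt T (mem_filter.1 hT).2
  refine (Convex.helly_theorem' (s := univ) (fun i _ => h_convex i m) fun I _ hI => ?_).ne_empty
    (by simpa using h_empty m hm)
  refine (h_ne I hI).mono (Set.biInter_mono subset_rfl fun i _ => ?_)
  exact h_mono i (le_sup' level (mem_filter.2 ⟨mem_univ I, hI⟩))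

theorem Convex.exists_card_le_finrank_inter_biInter_eq_empty [Fintype ι] {K : Set E}
    {F : ι → Set E} (hK : Convex 𝕜 K) (h_convex : ∀ i, Convex 𝕜 (F i))
    (h_ne : (⋂ i, F i).Nonempty) (h_empty : K ∩ ⋂ i, F i = ∅) :
    ∃ C : Finset ι, #C ≤ finrank 𝕜 E ∧ K ∩ ⋂ i ∈ C, F i = ∅ := by
  set G : Option ι → Set E := fun o => o.elim K F
  obtain ⟨I, -, hI, hI_empty⟩ := Convex.exists_card_le_biInter_eq_empty (𝕜 := 𝕜) (s := univ)
    (F := G) (fun o _ => by cases o <;> simp [G, hK, h_convex])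
    (by simpa [Set.iInter_option, G] using h_empty)
  have h_none : none ∈ I := by
    by_contra h_none
    refine h_ne.ne_empty (Set.subset_eq_empty (fun y hy => Set.mem_biInter fun o ho => ?_) hI_empty)
    cases o with
    | none => exact absurd ho h_none
    | some i => exact Set.mem_iInter.1 hy i
  refine ⟨I.eraseNone, by rw [card_eraseNone_of_mem h_none]; omega,
    Set.subset_eq_empty (fun y ⟨hyK, hyF⟩ => Set.mem_biInter fun o ho => ?_) hI_empty⟩
  cases o with
  | none => exact hyK
  | some i => exact Set.mem_iInter₂.1 hyF i (mem_eraseNone.2 ho)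

end Helly

theorem quasiconvex_program_has_small_basis_general (d : ℕ) {ι : Type*} [Fintype ι]
    (κ : ι → ℝ → Set (Fin d → ℝ))
    (hconvex : ∀ i l, Convex ℝ (κ i l))
    (hmono : ∀ i, Monotone (κ i))
    (hbdd : BddBelow {l : ℝ | (⋂ i, κ i l).Nonempty})
    (x : Fin d → ℝ)
    (hx : x ∈ ⋂ i, κ i (sInf {l : ℝ | (⋂ i, κ i l).Nonempty}))
    (hlex : ∀ y ∈ ⋂ i, κ i (sInf {l : ℝ | (⋂ i, κ i l).Nonempty}), toLex x ≤ toLex y) :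
    ∃ B : Finset ι, B.Nonempty ∧ B.card ≤ 2 * d + 1 ∧
      BddBelow {l : ℝ | (⋂ i ∈ B, κ i l).Nonempty} ∧
      sInf {l : ℝ | (⋂ i ∈ B, κ i l).Nonempty} = sInf {l : ℝ | (⋂ i, κ i l).Nonempty} ∧
      (x ∈ ⋂ i ∈ B, κ i (sInf {l : ℝ | (⋂ i ∈ B, κ i l).Nonempty})) ∧
      ∀ y ∈ ⋂ i ∈ B, κ i (sInf {l : ℝ | (⋂ i ∈ B, κ i l).Nonempty}), toLex x ≤ toLex y := by
  classical
  set lS := sInf {l : ℝ | (⋂ i, κ i l).Nonempty}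
  have h_below : ∀ l < lS, ⋂ i, κ i l = ∅ := fun l hl =>
    Set.not_nonempty_iff_eq_empty.1 (notMem_of_lt_csInf (x := l) hl hbdd)
  obtain ⟨T, hT, hT_empty⟩ := Convex.exists_card_le_forall_lt_biInter_eq_empty hconvex hmono h_below
  obtain ⟨C, hC, hC_empty⟩ := (convex_setOf_toLex_lt x).exists_card_le_finrank_inter_biInter_eq_empty
    (fun i => hconvex i lS) ⟨x, hx⟩
    (Set.eq_empty_of_forall_notMem fun y ⟨hy_lt, hy⟩ => (hlex y hy).not_gt hy_lt)
  have hxB : x ∈ ⋂ i ∈ T ∪ C, κ i lS := Set.mem_biInter fun i _ => Set.mem_iInter.1 hx i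
  have h_least : IsLeast {l | (⋂ i ∈ T ∪ C, κ i l).Nonempty} lS :=
    ⟨⟨x, hxB⟩, fun l ⟨y, hy⟩ => not_lt.1 fun hl => (hT_empty l hl).subset
      (Set.mem_biInter fun i hi => Set.mem_iInter₂.1 hy i (mem_union_left C hi))⟩
  have hT_ne : T.Nonempty := nonempty_iff_ne_empty.2 fun hT₀ => by
    simpa [hT₀] using hT_empty (lS - 1) (by linarith)
  refine ⟨T ∪ C, hT_ne.mono subset_union_left, ?_, h_least.bddBelow, h_least.csInf_eq, ?_, ?_⟩
  · simp only [finrank_fin_fun] at hT hC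
    linarith [card_union_le T C]
  · rwa [h_least.csInf_eq]
  · rw [h_least.csInf_eq]
    exact fun y hy => not_lt.1 fun hy_lt => hC_empty.subset
      ⟨hy_lt, Set.mem_biInter fun i hi => Set.mem_iInter₂.1 hy i (mem_union_right T hi)⟩

/-- Every quasiconvex program in `ℝ^d` has a basis of at most `2d + 1` constraints determining
its value: there is a subfamily `B` of at most `2d + 1` of the nested convex families whose
program has the same optimal level `λ` and the same lexicographically least optimal point. -/
theorem quasiconvex_program_has_small_basis (d : ℕ) {ι : Type*} [Fintype ι] [Nonempty ι]
    (κ : ι → ℝ → Set (Fin d → ℝ))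
    (hcompact : ∀ i l, IsCompact (κ i l))
    (hconvex : ∀ i l, Convex ℝ (κ i l))
    (hmono : ∀ i, Monotone (κ i))
    (hrc : ∀ i l, κ i l = ⋂ l' ∈ Set.Ioi l, κ i l')
    (hne : {l : ℝ | (⋂ i, κ i l).Nonempty}.Nonempty)
    (hbdd : BddBelow {l : ℝ | (⋂ i, κ i l).Nonempty})
    (x : Fin d → ℝ)
    (hx : x ∈ ⋂ i, κ i (sInf {l : ℝ | (⋂ i, κ i l).Nonempty}))
    (hlex : ∀ y ∈ ⋂ i, κ i (sInf {l : ℝ | (⋂ i, κ i l).Nonempty}), toLex x ≤ toLex y) :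
    ∃ B : Finset ι, B.Nonempty ∧ B.card ≤ 2 * d + 1 ∧
      BddBelow {l : ℝ | (⋂ i ∈ B, κ i l).Nonempty} ∧
      sInf {l : ℝ | (⋂ i ∈ B, κ i l).Nonempty} = sInf {l : ℝ | (⋂ i, κ i l).Nonempty} ∧
      (x ∈ ⋂ i ∈ B, κ i (sInf {l : ℝ | (⋂ i ∈ B, κ i l).Nonempty})) ∧
      ∀ y ∈ ⋂ i ∈ B, κ i (sInf {l : ℝ | (⋂ i ∈ B, κ i l).Nonempty}), toLex x ≤ toLex y :=
  quasiconvex_program_has_small_basis_general d κ hconvex hmono hbdd x hx hlex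
end

section
/- Fix the two points (0,0) and (1,0) in ℝ² and, for a variable apex (x, y) in the open upper halfplane H = {(x, y) | y > 0}, define the Bank–Smith quality g(x, y) = y / ((x² + y²) + ((x−1)² + y²) + 1), which is proportional to the triangle's area divided by the sum of the squares of its edge lengths. Then for every c > 0 the upper level set {(x, y) ∈ H | g(x, y) ≥ c} is convex (it is the intersection with H of a closed disk centered on the perpendicular bisector x = 1/2); equivalently, −g is quasiconvex on H. -/
/-- The Bank–Smith quality measure `g(x,y) = y / ((x² + y²) + ((x−1)² + y²) + 1)` has convex
upper level sets on the open upper halfplane; equivalently `−g` is quasiconvex there. -/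
theorem bank_smith_quality_upper_level_sets_convex
    (H : Set (ℝ × ℝ)) (hH : H = {p | 0 < p.2})
    (g : ℝ × ℝ → ℝ)
    (hg : ∀ p, g p = p.2 / ((p.1 ^ 2 + p.2 ^ 2) + ((p.1 - 1) ^ 2 + p.2 ^ 2) + 1)) :
    (∀ c : ℝ, 0 < c → Convex ℝ {p ∈ H | c ≤ g p}) ∧
      QuasiconvexOn ℝ H (fun p => -g p) := by
  subst hH
  have hD : ∀ p : ℝ × ℝ, (0:ℝ) < (p.1 ^ 2 + p.2 ^ 2) + ((p.1 - 1) ^ 2 + p.2 ^ 2) + 1 := by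
    intro p; nlinarith [sq_nonneg p.1, sq_nonneg p.2, sq_nonneg (p.1 - 1)]
  have hpos : ∀ (a b : ℝ) (p q : ℝ × ℝ), 0 ≤ a → 0 ≤ b → a + b = 1 →
      0 < p.2 → 0 < q.2 → 0 < a * p.2 + b * q.2 := by
    intro a b p q ha hb hab hp hq
    rcases eq_or_lt_of_le ha with h | h
    · have : b = 1 := by linarith
      simp [← h, this, hq]
    · have h1 : 0 < a * p.2 := mul_pos h hp
      have h2 : 0 ≤ b * q.2 := mul_nonneg hb hq.le
      linarith
  have key : ∀ c : ℝ, 0 < c → Convex ℝ {p ∈ {p : ℝ × ℝ | 0 < p.2} | c ≤ g p} := by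
    intro c hc p hp q hq a b ha hb hab
    obtain ⟨hp2, hpg⟩ := hp
    obtain ⟨hq2, hqg⟩ := hq
    rw [hg, le_div_iff₀ (hD p)] at hpg
    rw [hg, le_div_iff₀ (hD q)] at hqg
    have hz1 : (a • p + b • q).1 = a * p.1 + b * q.1 := rfl
    have hz2 : (a • p + b • q).2 = a * p.2 + b * q.2 := rfl
    constructor
    · show 0 < (a • p + b • q).2
      rw [hz2]; exact hpos a b p q ha hb hab hp2 hq2
    · show c ≤ g (a • p + b • q)
      rw [hg, le_div_iff₀ (hD _), hz1, hz2]
      have h1 : a * (c * ((p.1 ^ 2 + p.2 ^ 2) + ((p.1 - 1) ^ 2 + p.2 ^ 2) + 1)) ≤ a * p.2 :=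
        mul_le_mul_of_nonneg_left hpg ha
      have h2 : b * (c * ((q.1 ^ 2 + q.2 ^ 2) + ((q.1 - 1) ^ 2 + q.2 ^ 2) + 1)) ≤ b * q.2 :=
        mul_le_mul_of_nonneg_left hqg hb
      have hb' : b = 1 - a := by linarith
      subst hb'
      nlinarith [mul_nonneg (mul_nonneg ha hb) hc.le, sq_nonneg (p.1 - q.1),
        sq_nonneg (p.2 - q.2),
        mul_nonneg (mul_nonneg (mul_nonneg ha hb) hc.le) (sq_nonneg (p.1 - q.1)),
        mul_nonneg (mul_nonneg (mul_nonneg ha hb) hc.le) (sq_nonneg (p.2 - q.2))]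
  refine ⟨key, ?_⟩
  intro r
  by_cases h : 0 < -r
  · have heq : {p ∈ {p : ℝ × ℝ | 0 < p.2} | (fun p => -g p) p ≤ r}
        = {p ∈ {p : ℝ × ℝ | 0 < p.2} | -r ≤ g p} := by
      ext p; simp only [Set.mem_setOf_eq]; constructor
      · rintro ⟨h1, h2⟩; exact ⟨h1, by linarith⟩
      · rintro ⟨h1, h2⟩; exact ⟨h1, by linarith⟩
    rw [heq]; exact key (-r) h
  · have heq : {p ∈ {p : ℝ × ℝ | 0 < p.2} | (fun p => -g p) p ≤ r}
        = {p : ℝ × ℝ | 0 < p.2} := by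
      ext p; simp only [Set.mem_setOf_eq]
      constructor
      · rintro ⟨h1, _⟩; exact h1
      · intro h1
        refine ⟨h1, ?_⟩
        have : 0 < g p := by rw [hg]; exact div_pos h1 (hD p)
        push_neg at h
        linarith
    rw [heq]
    intro p hp q hq a b ha hb hab
    show 0 < (a • p + b • q).2
    exact hpos a b p q ha hb hab hp hq
end

section
/- Let v ∈ ℝ³ and let u ∈ ℝ³ be a unit vector, and let H = {x ∈ ℝ³ | u · (x − v) > 0} be the open halfspace on the positive side of the plane through v with normal u. Then the function f(x) = ‖x − v‖^{3/2} / (u · (x − v))^{1/2} is convex on H. Consequently, the illumination intensity function q(x) = −(u · (x − v)) / ‖x − v‖³, which satisfies f(x) = (−q(x))^{−1/2}, is quasiconvex on H. -/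
lemma illum_key' (s t w : ℝ) (hs : 0 ≤ s) (ht : 0 < t) (hw : 0 ≤ w) :
    3/2 * w * s^2 - 1/2 * (w^2 * w) * t^2 ≤ s^2 * s / t := by
  rw [le_div_iff₀ ht]
  nlinarith [mul_nonneg (sq_nonneg (s - w*t)) (by positivity : (0:ℝ) ≤ 2*s + w*t)]

lemma illum_key (a b c : ℝ) (ha : 0 ≤ a) (hb : 0 < b) (hc : 0 ≤ c) :
    3/2 * Real.sqrt c * a - 1/2 * (c * Real.sqrt c) * b
      ≤ a * Real.sqrt a / Real.sqrt b := by
  have h := illum_key' (Real.sqrt a) (Real.sqrt b) (Real.sqrt c)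
    (Real.sqrt_nonneg a) (Real.sqrt_pos.mpr hb) (Real.sqrt_nonneg c)
  rwa [Real.sq_sqrt ha, Real.sq_sqrt hb.le, Real.sq_sqrt hc] at h

lemma illum_comb (ax bx ay by' az bz p q : ℝ)
    (hax : 0 ≤ ax) (hbx : 0 < bx) (hay : 0 ≤ ay) (hby : 0 < by')
    (hbz : 0 < bz) (hazbz : bz ≤ az)
    (hp : 0 ≤ p) (hq : 0 ≤ q)
    (hbsum : bz = p * bx + q * by') (hasum : az ≤ p * ax + q * ay) :
    az * Real.sqrt az / Real.sqrt bz
      ≤ p * (ax * Real.sqrt ax / Real.sqrt bx) + q * (ay * Real.sqrt ay / Real.sqrt by') := by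
  have haz : 0 < az := lt_of_lt_of_le hbz hazbz
  set c : ℝ := az / bz with hcdef
  have hc : 0 ≤ c := le_of_lt (div_pos haz hbz)
  have hsc : Real.sqrt c = Real.sqrt az / Real.sqrt bz := Real.sqrt_div haz.le bz
  have hbzs : Real.sqrt bz ≠ 0 := ne_of_gt (Real.sqrt_pos.mpr hbz)
  have heq : az * Real.sqrt az / Real.sqrt bz
      = 3/2 * Real.sqrt c * az - 1/2 * (c * Real.sqrt c) * bz := by
    rw [hsc, hcdef]
    field_simp
    ring
  calc az * Real.sqrt az / Real.sqrt bz
      = 3/2 * Real.sqrt c * az - 1/2 * (c * Real.sqrt c) * bz := heq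
    _ ≤ 3/2 * Real.sqrt c * (p * ax + q * ay) - 1/2 * (c * Real.sqrt c) * (p * bx + q * by') := by
        rw [← hbsum]
        have h1 : 3/2 * Real.sqrt c * az ≤ 3/2 * Real.sqrt c * (p * ax + q * ay) := by
          apply mul_le_mul_of_nonneg_left hasum
          positivity
        linarith
    _ = p * (3/2 * Real.sqrt c * ax - 1/2 * (c * Real.sqrt c) * bx)
        + q * (3/2 * Real.sqrt c * ay - 1/2 * (c * Real.sqrt c) * by') := by ring
    _ ≤ p * (ax * Real.sqrt ax / Real.sqrt bx) + q * (ay * Real.sqrt ay / Real.sqrt by') := by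
        gcongr ?_ + ?_ <;>
          [exact mul_le_mul_of_nonneg_left (illum_key ax bx c hax hbx hc) hp;
           exact mul_le_mul_of_nonneg_left (illum_key ay by' c hay hby hc) hq]

open scoped RealInnerProductSpace in
/-- On the open halfspace `H = {x | ⟪u, x − v⟫ > 0}`, the function
`f(x) = ‖x − v‖^{3/2} / ⟪u, x − v⟫^{1/2}` is convex; consequently the illumination intensity
function `q(x) = −⟪u, x − v⟫ / ‖x − v‖³`, which satisfies `f = (−q)^{−1/2}` on `H`, is
quasiconvex on `H`. -/
theorem illumination_intensity_quasiconvex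
    (v u : EuclideanSpace ℝ (Fin 3)) (hu : ‖u‖ = 1)
    (H : Set (EuclideanSpace ℝ (Fin 3))) (hH : H = {x | 0 < ⟪u, x - v⟫})
    (f q : EuclideanSpace ℝ (Fin 3) → ℝ)
    (hf : ∀ x, f x = ‖x - v‖ ^ ((3 : ℝ) / 2) / ⟪u, x - v⟫ ^ ((1 : ℝ) / 2))
    (hq : ∀ x, q x = -⟪u, x - v⟫ / ‖x - v‖ ^ 3) :
    ConvexOn ℝ H f ∧ (∀ x ∈ H, f x = (-q x) ^ (-(1 : ℝ) / 2)) ∧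
      QuasiconvexOn ℝ H q := by
  subst hH
  -- basic facts
  have hBA : ∀ x : EuclideanSpace ℝ (Fin 3), ⟪u, x - v⟫ ≤ ‖x - v‖ := by
    intro x
    calc ⟪u, x - v⟫ ≤ ‖u‖ * ‖x - v‖ := real_inner_le_norm u (x - v)
      _ = ‖x - v‖ := by rw [hu, one_mul]
  have hApos : ∀ x ∈ {x : EuclideanSpace ℝ (Fin 3) | 0 < ⟪u, x - v⟫},
      0 < ‖x - v‖ := fun x hx => lt_of_lt_of_le hx (hBA x)
  -- f as sqrt expression on H
  have hfG : ∀ x ∈ {x : EuclideanSpace ℝ (Fin 3) | 0 < ⟪u, x - v⟫},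
      f x = ‖x - v‖ * Real.sqrt ‖x - v‖ / Real.sqrt ⟪u, x - v⟫ := by
    intro x hx
    have hA := hApos x hx
    have h1 : ‖x - v‖ ^ ((3:ℝ)/2) = ‖x - v‖ * Real.sqrt ‖x - v‖ := by
      rw [show (3:ℝ)/2 = 1 + 1/2 by norm_num, Real.rpow_add hA, Real.rpow_one,
        ← Real.sqrt_eq_rpow]
    have h2 : ⟪u, x - v⟫ ^ ((1:ℝ)/2) = Real.sqrt ⟪u, x - v⟫ := by
      rw [← Real.sqrt_eq_rpow]
    rw [hf, h1, h2]
  -- linear algebra of combinations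
  have hcombo : ∀ (x y : EuclideanSpace ℝ (Fin 3)) (a b : ℝ), a + b = 1 →
      a • x + b • y - v = a • (x - v) + b • (y - v) := by
    intro x y a b hab
    have : a • (x - v) + b • (y - v) = a • x + b • y - (a + b) • v := by
      rw [smul_sub, smul_sub, add_smul]; abel
    rw [this, hab, one_smul]
  have hinner : ∀ (x y : EuclideanSpace ℝ (Fin 3)) (a b : ℝ), a + b = 1 →
      ⟪u, a • x + b • y - v⟫ = a * ⟪u, x - v⟫ + b * ⟪u, y - v⟫ := by
    intro x y a b hab
    rw [hcombo x y a b hab, inner_add_right, real_inner_smul_right, real_inner_smul_right]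
  have hconvH : Convex ℝ {x : EuclideanSpace ℝ (Fin 3) | 0 < ⟪u, x - v⟫} := by
    intro x hx y hy a b ha hb hab
    simp only [Set.mem_setOf_eq] at hx hy ⊢
    rw [hinner x y a b hab]
    rcases eq_or_lt_of_le ha with h | h
    · rw [← h] at hab ⊢
      simp only [zero_mul, zero_add] at hab ⊢
      rw [hab] at hb ⊢
      simpa using hy
    · have : 0 ≤ b * ⟪u, y - v⟫ := mul_nonneg hb hy.le
      nlinarith [mul_pos h hx]
  -- convexity of f
  have hconvf : ConvexOn ℝ {x : EuclideanSpace ℝ (Fin 3) | 0 < ⟪u, x - v⟫} f := by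
    refine ⟨hconvH, ?_⟩
    intro x hx y hy a b ha hb hab
    simp only [Set.mem_setOf_eq] at hx hy
    have hz : (0:ℝ) < ⟪u, a • x + b • y - v⟫ := hconvH hx hy ha hb hab
    have hAz := hApos _ hz
    rw [hfG x hx, hfG y hy, hfG _ hz]
    have hnorm : ‖a • x + b • y - v‖ ≤ a * ‖x - v‖ + b * ‖y - v‖ := by
      rw [hcombo x y a b hab]
      calc ‖a • (x - v) + b • (y - v)‖ ≤ ‖a • (x - v)‖ + ‖b • (y - v)‖ := norm_add_le _ _
        _ = a * ‖x - v‖ + b * ‖y - v‖ := by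
            rw [norm_smul, norm_smul, Real.norm_eq_abs, Real.norm_eq_abs,
              abs_of_nonneg ha, abs_of_nonneg hb]
    exact illum_comb ‖x - v‖ ⟪u, x - v⟫ ‖y - v‖ ⟪u, y - v⟫
      ‖a • x + b • y - v‖ ⟪u, a • x + b • y - v⟫ a b
      (norm_nonneg _) hx (norm_nonneg _) hy hz (hBA _) ha hb
      (hinner x y a b hab) hnorm
  -- the identity on H
  have hfq : ∀ x ∈ {x : EuclideanSpace ℝ (Fin 3) | 0 < ⟪u, x - v⟫},
      f x = (-q x) ^ (-(1:ℝ)/2) := by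
    intro x hx
    have hA := hApos x hx
    have hnq : -q x = ⟪u, x - v⟫ / ‖x - v‖ ^ 3 := by
      rw [hq]; field_simp
    have h3 : ‖x - v‖ ^ ((3:ℝ)/2) = (‖x - v‖ ^ 3) ^ ((1:ℝ)/2) := by
      rw [← Real.rpow_natCast ‖x - v‖ 3, ← Real.rpow_mul (norm_nonneg _)]
      norm_num
    rw [hf, hnq, h3,
      show (-(1:ℝ)/2) = -((1:ℝ)/2) by norm_num,
      Real.rpow_neg (div_nonneg hx.le (by positivity)),
      Real.div_rpow hx.le (by positivity), inv_div]
  refine ⟨hconvf, hfq, ?_⟩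
  -- quasiconvexity of q
  intro c
  have hqneg : ∀ x ∈ {x : EuclideanSpace ℝ (Fin 3) | 0 < ⟪u, x - v⟫}, q x < 0 := by
    intro x hx
    have hA := hApos x hx
    have hpos : (0:ℝ) < ⟪u, x - v⟫ / ‖x - v‖ ^ 3 := div_pos hx (by positivity)
    rw [hq, neg_div]
    linarith
  rcases le_or_gt 0 c with hc | hc
  · have hset : {x ∈ {x : EuclideanSpace ℝ (Fin 3) | 0 < ⟪u, x - v⟫} | q x ≤ c}
        = {x : EuclideanSpace ℝ (Fin 3) | 0 < ⟪u, x - v⟫} := by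
      ext x
      exact ⟨fun h => h.1, fun h => ⟨h, le_trans (hqneg x h).le hc⟩⟩
    rw [hset]; exact hconvH
  · have hset : {x ∈ {x : EuclideanSpace ℝ (Fin 3) | 0 < ⟪u, x - v⟫} | q x ≤ c}
        = {x ∈ {x : EuclideanSpace ℝ (Fin 3) | 0 < ⟪u, x - v⟫} | f x ≤ (-c) ^ (-(1:ℝ)/2)} := by
      ext x
      simp only [Set.mem_setOf_eq]
      refine and_congr_right fun hx => ?_
      rw [hfq x hx]
      have hqx : 0 < -q x := neg_pos.mpr (hqneg x hx)
      have hcpos : 0 < -c := neg_pos.mpr hc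
      rw [show (-(1:ℝ)/2) = -((1:ℝ)/2) by norm_num,
        Real.rpow_neg hqx.le, Real.rpow_neg hcpos.le,
        ← Real.sqrt_eq_rpow, ← Real.sqrt_eq_rpow,
        inv_le_inv₀ (Real.sqrt_pos.mpr hqx) (Real.sqrt_pos.mpr hcpos),
        Real.sqrt_le_sqrt_iff hqx.le]
      constructor
      · intro h; linarith
      · intro h; linarith
    rw [hset]
    exact hconvf.convex_le _
end

section
/- (Centerpoint theorem / depth of the Tukey median.) Let S be a finite set of n points in ℝ^d. Then there exists a point c ∈ ℝ^d of Tukey depth at least n/(d+1): every closed halfspace of ℝ^d that contains c contains at least n/(d+1) points of S. -/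
open scoped RealInnerProductSpace in
/-- Centerpoint theorem: for any finite set `S` of points in `ℝ^d` there is a point `c` of
Tukey depth at least `|S| / (d + 1)`: every closed halfspace containing `c` contains at least
`|S| / (d + 1)` of the points of `S`. -/
theorem exists_centerpoint (d : ℕ) (S : Finset (EuclideanSpace ℝ (Fin d))) :
    ∃ c : EuclideanSpace ℝ (Fin d),
      ∀ (a : EuclideanSpace ℝ (Fin d)) (b : ℝ), a ≠ 0 → b ≤ ⟪a, c⟫ →
        (S.card : ℝ) / (d + 1) ≤
          ({p ∈ (S : Set (EuclideanSpace ℝ (Fin d))) | b ≤ ⟪a, p⟫}.ncard : ℝ) := by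
  classical
  set n := S.card with hn
  -- the family of "heavy" subsets
  set Fam : Finset (Finset (EuclideanSpace ℝ (Fin d))) :=
    S.powerset.filter (fun T => d * n < (d + 1) * T.card) with hFam
  have hfinrank : Module.finrank ℝ (EuclideanSpace ℝ (Fin d)) = d := finrank_euclideanSpace_fin
  -- Helly hypothesis: any ≤ d+1 heavy subsets have a common point of S
  have h_inter : ∀ I ⊆ Fam, I.card ≤ Module.finrank ℝ (EuclideanSpace ℝ (Fin d)) + 1 →
      (⋂ T ∈ I, (convexHull ℝ (T : Set (EuclideanSpace ℝ (Fin d))))).Nonempty := by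
    intro I hI hIcard
    rw [hfinrank] at hIcard
    rcases I.eq_empty_or_nonempty with rfl | hIne
    · simp
    have hn0 : 0 < n := by
      obtain ⟨T, hT⟩ := hIne
      have := hI hT
      rw [hFam, Finset.mem_filter] at this
      have hTle := Finset.card_le_card (Finset.mem_powerset.mp this.1)
      have h2 := this.2
      by_contra hz
      push_neg at hz
      have h0 : n = 0 := Nat.le_zero.mp hz
      have h1 : T.card = 0 := Nat.le_zero.mp (h0 ▸ hTle)
      rw [h0, h1, Nat.mul_zero, Nat.mul_zero] at h2
      exact lt_irrefl 0 h2
    -- the set of "bad" points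
    set B : Finset (EuclideanSpace ℝ (Fin d)) := I.biUnion (fun T => S \ T) with hB
    have hBcard : (d + 1) * B.card ≤ (d + 1) * (n - 1) := by
      calc (d + 1) * B.card ≤ (d + 1) * ∑ T ∈ I, (S \ T).card := by
            exact Nat.mul_le_mul_left _ Finset.card_biUnion_le
        _ = ∑ T ∈ I, (d + 1) * (S \ T).card := by rw [Finset.mul_sum]
        _ ≤ ∑ T ∈ I, (n - 1) := by
            apply Finset.sum_le_sum
            intro T hT
            have hTmem := hI hT
            rw [hFam, Finset.mem_filter, Finset.mem_powerset] at hTmem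
            have hsub := hTmem.1
            have hheavy := hTmem.2
            have hcardsd : (S \ T).card = n - T.card := by
              rw [Finset.card_sdiff_of_subset hsub]
            have hTle : T.card ≤ n := Finset.card_le_card hsub
            rw [hcardsd]
            -- (d+1)(n - t) ≤ n - 1 since (d+1) t > d n
            have : (d + 1) * (n - T.card) + (d + 1) * T.card = (d + 1) * n := by
              rw [← Nat.mul_add, Nat.sub_add_cancel hTle]
            have h2 : (d + 1) * n = d * n + n := by ring
            omega
        _ = I.card * (n - 1) := by rw [Finset.sum_const, smul_eq_mul]
        _ ≤ (d + 1) * (n - 1) := Nat.mul_le_mul_right _ hIcard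
    have hBlt : B.card < n := by
      have := Nat.le_of_mul_le_mul_left hBcard (Nat.succ_pos d)
      omega
    -- pick a point of S outside B
    have hBsub : B ⊆ S := by
      intro x hx
      rw [hB, Finset.mem_biUnion] at hx
      obtain ⟨T, _, hxT⟩ := hx
      exact (Finset.mem_sdiff.mp hxT).1
    obtain ⟨p, hpS, hpB⟩ : ∃ p ∈ S, p ∉ B := by
      by_contra h
      push_neg at h
      have : S ⊆ B := h
      have := Finset.card_le_card this
      omega
    refine ⟨p, ?_⟩
    rw [Set.mem_iInter₂]
    intro T hT
    apply subset_convexHull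
    have hTmem := hI hT
    rw [hFam, Finset.mem_filter, Finset.mem_powerset] at hTmem
    by_contra hpT
    exact hpB (Finset.mem_biUnion.mpr ⟨T, hT, Finset.mem_sdiff.mpr ⟨hpS, hpT⟩⟩)
  obtain ⟨c, hc⟩ := Convex.helly_theorem' (𝕜 := ℝ)
    (F := fun T : Finset (EuclideanSpace ℝ (Fin d)) => convexHull ℝ (T : Set (EuclideanSpace ℝ (Fin d)))) (s := Fam)
    (fun T _ => convex_convexHull ℝ _) h_inter
  rw [Set.mem_iInter₂] at hc
  refine ⟨c, ?_⟩
  intro a b ha hb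
  by_contra hlt
  push_neg at hlt
  -- translate ncard to Finset.card
  have hset : {p ∈ (S : Set (EuclideanSpace ℝ (Fin d))) | b ≤ ⟪a, p⟫} = ↑(S.filter (fun p => b ≤ ⟪a, p⟫)) := by
    ext x; simp
  rw [hset, Set.ncard_coe_finset] at hlt
  set m := (S.filter (fun p => b ≤ ⟪a, p⟫)).card with hm
  have hmn : (d + 1) * m < n := by
    have hd1 : (0:ℝ) < (d:ℝ) + 1 := by positivity
    have h := (lt_div_iff₀ hd1).mp hlt
    have h2 : (((d + 1) * m : ℕ) : ℝ) < ((n : ℕ) : ℝ) := by push_cast; nlinarith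
    exact_mod_cast h2
  -- the complementary heavy set
  set T : Finset (EuclideanSpace ℝ (Fin d)) := S.filter (fun p => ¬ b ≤ ⟪a, p⟫) with hT
  have hTcard : T.card = n - m := by
    rw [hT, Finset.filter_not, Finset.card_sdiff_of_subset (Finset.filter_subset _ _)]
  have hTFam : T ∈ Fam := by
    rw [hFam, Finset.mem_filter, Finset.mem_powerset]
    refine ⟨Finset.filter_subset _ _, ?_⟩
    rw [hTcard]
    have hmlen : m ≤ n := Finset.card_le_card (Finset.filter_subset _ _)
    have : (d + 1) * (n - m) + (d + 1) * m = (d + 1) * n := by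
      rw [← Nat.mul_add, Nat.sub_add_cancel hmlen]
    have h2 : (d + 1) * n = d * n + n := by ring
    omega
  have hcT : c ∈ convexHull ℝ (T : Set (EuclideanSpace ℝ (Fin d))) := hc T hTFam
  have hsub : convexHull ℝ (T : Set (EuclideanSpace ℝ (Fin d))) ⊆ {x : (EuclideanSpace ℝ (Fin d)) | ⟪a, x⟫ < b} := by
    apply convexHull_min
    · intro x hx
      rw [hT] at hx
      simp only [Finset.coe_filter, Set.mem_setOf_eq] at hx
      exact lt_of_not_ge hx.2
    · exact convex_halfSpace_lt
        ⟨fun x y => inner_add_right a x y, fun r x => real_inner_smul_right a x r⟩ b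
  exact absurd hb (not_le.mpr (hsub hcT))
end
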